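/- arXiv:1404.0139 — 2 statements merged into one kernel-verified Lean document; each statement's English description precedes it below -/
import Mathlib

section
/- Assume χ > χ_N = 1 + 1/N. Then for any solution X of the discrete Keller–Segel particle system, defined on its maximal interval of existence [0,T): (i) |X_i(t)| ≤ √(∑_{j=1}^N X_j(0)²) for every index i and every t ∈ [0,T); (ii) T is finite, with T ≤ (∑_j X_j(0)²)/(2(N−1)(χ h_N N − 1)); (iii) there exists an index i ∈ {1,…,N−1} such that liminf_{t→T⁻}(X_{i+1}(t)−X_i(t)) = 0; in particular a weak blow-up set exists. -/
/-!
Multiplying the `i`-th equation by `X_i` and summing, the nearest-neighbour terms telescope to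
`N - 1` and the interaction terms symmetrize to `-χ h_N N (N - 1)`, so the second moment
`∑ X_i²` decreases at the constant rate `2 (N - 1) (χ h_N N - 1) > 0`. This bounds every particle
by the initial second moment, and since the second moment stays nonnegative it bounds `T`.

If every consecutive gap had a positive liminf at `T`, all gaps would stay above some `ε > 0`
near `T`. The vector field is Lipschitz on configurations with gaps at least `ε / 2`, and the
particles stay bounded, so the `ε / 4`-neighbourhood of the trajectory stays in a bounded region
where the field is Lipschitz; Picard–Lindelöf then continues the solution past `T`, contradicting
maximality. A gap with liminf zero gives a weak candidate,
and a maximal weak candidate is a weak blow-up set.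
-/

open Filter

noncomputable section

/-- `h_N = 1/(N+1)`. -/
def hN (N : ℕ) : ℝ := 1 / (N + 1)

/-- Right-hand side of the discrete Keller–Segel particle ODE, with the convention that
the boundary terms `1/(X_1 - X_0)` and `1/(X_{N+1} - X_N)` are set to zero. -/
def ksRHS (N : ℕ) (χ : ℝ) (x : ℕ → ℝ) (i : ℕ) : ℝ :=
  (if i < N then -(1 / (x (i + 1) - x i)) else 0)
    + (if 1 < i then 1 / (x i - x (i - 1)) else 0)
    + 2 * χ * hN N * ∑ j ∈ (Finset.Icc 1 N).erase i, 1 / (x j - x i)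

/-- A solution of the discrete Keller–Segel particle system on `[0,T)`. -/
structure IsKSSol (N : ℕ) (χ T : ℝ) (X : ℕ → ℝ → ℝ) : Prop where
  ordered : ∀ t ∈ Set.Ico (0 : ℝ) T, ∀ i, 1 ≤ i → i < N → X i t < X (i + 1) t
  ode : ∀ i ∈ Finset.Icc 1 N, ∀ t ∈ Set.Ico (0 : ℝ) T,
    HasDerivAt (X i) (ksRHS N χ (fun j => X j t) i) t

/-- A solution on its maximal interval of existence `[0,T)`: it cannot be extended to a
solution on any larger interval `[0,T')`. -/
def IsMaxKSSol (N : ℕ) (χ T : ℝ) (X : ℕ → ℝ → ℝ) : Prop :=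
  IsKSSol N χ T X ∧
    ∀ T' > T, ∀ X' : ℕ → ℝ → ℝ,
      (∀ i ∈ Finset.Icc 1 N, ∀ t ∈ Set.Ico (0 : ℝ) T, X' i t = X i t) →
        ¬ IsKSSol N χ T' X'

/-- `liminf_{t → T⁻} (X_{i+1}(t) - X_i(t)) = 0`. -/
def gapLiminfZero (X : ℕ → ℝ → ℝ) (T : ℝ) (i : ℕ) : Prop :=
  Filter.liminf (fun t => X (i + 1) t - X i t) (nhdsWithin T (Set.Iio T)) = 0

/-- A nonempty set of consecutive indices in `{1,…,N}` all of whose consecutive gaps have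
liminf zero at time `T`. -/
def IsWeakCand (N : ℕ) (X : ℕ → ℝ → ℝ) (T : ℝ) (I : Finset ℕ) : Prop :=
  I.Nonempty ∧ (∃ a b, 1 ≤ a ∧ b ≤ N ∧ I = Finset.Icc a b) ∧
    ∀ i, i ∈ I → i + 1 ∈ I → gapLiminfZero X T i

/-- A weak blow-up set: maximal for inclusion among weak candidates. -/
def IsWeakBlowup (N : ℕ) (X : ℕ → ℝ → ℝ) (T : ℝ) (I : Finset ℕ) : Prop :=
  IsWeakCand N X T I ∧ ∀ J, IsWeakCand N X T J → I ⊆ J → J = I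

/-- A strong blow-up set: all consecutive gaps tend to zero, and the particles of `I` stay
uniformly away from the particles outside `I`. -/
def IsStrongBlowup (N : ℕ) (X : ℕ → ℝ → ℝ) (T : ℝ) (I : Finset ℕ) : Prop :=
  IsWeakBlowup N X T I ∧
    (∀ i, i ∈ I → i + 1 ∈ I →
      Filter.Tendsto (fun t => X (i + 1) t - X i t) (nhdsWithin T (Set.Iio T)) (nhds 0)) ∧
    ∃ c > 0, ∀ i ∈ I, ∀ j ∈ Finset.Icc 1 N, j ∉ I → ∀ t ∈ Set.Ico (0 : ℝ) T,
      1 / c ≤ |X i t - X j t|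

/-- Mean of the configuration `x` over the index set `I`. -/
def meanOn (I : Finset ℕ) (x : ℕ → ℝ) : ℝ := (∑ i ∈ I, x i) / (I.card : ℝ)

/-- Variance `Π²_I` of the configuration `x` over the index set `I`. -/
def var2 (I : Finset ℕ) (x : ℕ → ℝ) : ℝ := ∑ i ∈ I, (x i - meanOn I x) ^ 2

/-- Exterior interaction potential `H_{IO,m} = ∑_{j∈O} ∑_{i∈I} 1/(x_j - x_i)^m`,
where `O = {1,…,N} \ I`. -/
def extPot (N : ℕ) (I : Finset ℕ) (m : ℕ) (x : ℕ → ℝ) : ℝ :=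
  ∑ j ∈ (Finset.Icc 1 N) \ I, ∑ i ∈ I, 1 / (x j - x i) ^ m


open scoped NNReal Topology

section Lipschitz

open Metric

variable {α β : Type*} [PseudoMetricSpace α] {S : Set α}

theorem exists_lipschitzOnWith_finset_sum [SeminormedAddCommGroup β] {ι : Type*} (s : Finset ι)
    {f : ι → α → β} (hf : ∀ j ∈ s, ∃ K, LipschitzOnWith K (f j) S) :
    ∃ K, LipschitzOnWith K (fun y => ∑ j ∈ s, f j y) S := by
  classical
  induction s using Finset.induction_on with
  | empty => exact ⟨0, by simpa using (LipschitzWith.const (0 : β)).lipschitzOnWith⟩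
  | insert j s hj ih =>
    obtain ⟨K₁, h₁⟩ := hf j (Finset.mem_insert_self j s)
    obtain ⟨K₂, h₂⟩ := ih fun k hk => hf k (Finset.mem_insert_of_mem hk)
    exact ⟨K₁ + K₂, by simpa only [Finset.sum_insert hj] using h₁.add h₂⟩

theorem exists_lipschitzOnWith_pi [PseudoMetricSpace β] {ι : Type*} [Fintype ι] {f : α → ι → β}
    (hf : ∀ k, ∃ K, LipschitzOnWith K (fun y => f y k) S) : ∃ K, LipschitzOnWith K f S := by
  choose K hK using hf
  refine ⟨∑ k, K k, LipschitzOnWith.of_dist_le_mul fun y hy z hz => ?_⟩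
  refine (dist_pi_le_iff (by positivity)).2 fun k => ((hK k).dist_le_mul y hy z hz).trans ?_
  gcongr
  exact Finset.single_le_sum (f := K) (fun k _ => bot_le) (Finset.mem_univ k)

theorem LipschitzOnWith.exists_norm_le_of_isBounded [SeminormedAddCommGroup β] {K : ℝ≥0}
    {v : α → β} (hv : LipschitzOnWith K v S) (hS : Bornology.IsBounded S) :
    ∃ C, ∀ y ∈ S, ‖v y‖ ≤ C := by
  rcases S.eq_empty_or_nonempty with rfl | ⟨y₀, hy₀⟩
  · exact ⟨0, by simp⟩
  refine ⟨‖v y₀‖ + K * diam S, fun y hy => ?_⟩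
  calc ‖v y‖ ≤ ‖v y₀‖ + dist (v y) (v y₀) := by
        simpa [dist_eq_norm, add_comm] using norm_le_norm_add_norm_sub' (v y) (v y₀)
    _ ≤ ‖v y₀‖ + K * diam S := by
        gcongr
        exact (hv.dist_le_mul y hy y₀ hy₀).trans (by gcongr; exact dist_le_diam_of_mem hS hy hy₀)

end Lipschitz

theorem lipschitzOnWith_inv_of_le_abs {η : ℝ} (hη : 0 < η) :
    LipschitzOnWith (Real.toNNReal (η ^ 2)⁻¹) (fun u : ℝ => u⁻¹) {u | η ≤ |u|} := by
  refine LipschitzOnWith.of_dist_le_mul fun u (hu : η ≤ |u|) v (hv : η ≤ |v|) => ?_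
  have hu0 : u ≠ 0 := abs_pos.1 (hη.trans_le hu)
  have hv0 : v ≠ 0 := abs_pos.1 (hη.trans_le hv)
  rw [dist_inv_inv₀ hu0 hv0, Real.coe_toNNReal _ (by positivity), div_eq_inv_mul]
  gcongr
  rw [sq]
  exact mul_le_mul hu hv hη.le (abs_nonneg u)

theorem Filter.exists_pos_eventually_le_of_liminf_ne_zero {γ : Type*} {l : Filter γ} [l.NeBot]
    {f : γ → ℝ} {B : ℝ} (h0 : ∀ᶠ t in l, 0 ≤ f t) (hB : ∀ᶠ t in l, f t ≤ B)
    (h : liminf f l ≠ 0) : ∃ c > 0, ∀ᶠ t in l, c ≤ f t := by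
  have hpos : 0 < liminf f l :=
    (le_liminf_of_le (isBoundedUnder_of_eventually_le hB).isCoboundedUnder_ge h0).lt_of_ne' h
  exact ⟨liminf f l / 2, half_pos hpos, (eventually_lt_of_lt_liminf (half_lt_self hpos)
    (isBoundedUnder_of_eventually_ge h0)).mono fun t ht => ht.le⟩

theorem Filter.exists_pos_eventually_forall_le {ι γ : Type*} {l : Filter γ} (s : Finset ι)
    {g : ι → γ → ℝ} (h : ∀ i ∈ s, ∃ c > 0, ∀ᶠ t in l, c ≤ g i t) :
    ∃ c > 0, ∀ᶠ t in l, ∀ i ∈ s, c ≤ g i t := by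
  classical
  induction s using Finset.induction_on with
  | empty => exact ⟨1, one_pos, by simp⟩
  | insert j s hj ih =>
    obtain ⟨c₁, hc₁, h₁⟩ := h j (Finset.mem_insert_self j s)
    obtain ⟨c₂, hc₂, h₂⟩ := ih fun i hi => h i (Finset.mem_insert_of_mem hi)
    refine ⟨min c₁ c₂, lt_min hc₁ hc₂, (h₁.and h₂).mono fun t ht i hi => ?_⟩
    rcases Finset.mem_insert.1 hi with rfl | hi
    · exact (min_le_left _ _).trans ht.1
    · exact (min_le_right _ _).trans (ht.2 i hi)

theorem le_sub_of_forall_le_sub_add_one {x : ℕ → ℝ} {η : ℝ} {a b : ℕ} (hη : 0 ≤ η)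
    (h : ∀ k, a ≤ k → k < b → η ≤ x (k + 1) - x k) {i j : ℕ} (hai : a ≤ i) (hij : i < j)
    (hjb : j ≤ b) : η ≤ x j - x i := by
  have hmono : MonotoneOn (fun k : ℕ => x k - η * k) (Set.Icc a b) :=
    monotoneOn_of_le_add_one Set.ordConnected_Icc fun k _ hk hk1 => by
      have := h k hk.1 (by simpa using hk1.2)
      push_cast
      linarith
  have hgap := hmono ⟨hai, hij.le.trans hjb⟩ ⟨hai.trans hij.le, hjb⟩ hij.le
  have hji : (1 : ℝ) ≤ j - i := by
    have : (i : ℝ) + 1 ≤ j := by exact_mod_cast hij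
    linarith
  simp only at hgap
  nlinarith

section ODE

open Set Metric

variable {E : Type*} [NormedAddCommGroup E] [NormedSpace ℝ E] [CompleteSpace E] {v : E → E}
  {K : ℝ≥0}

-- Picard–Lindelöf is applied to `v` cut off outside the ball, which is bounded everywhere;
-- the a priori bound then keeps the solution inside the ball, where the cut-off is invisible.
theorem exists_hasDerivWithinAt_mem_closedBall {x₀ : E} {r C δ t₀ : ℝ}
    (hv : LipschitzOnWith K v (closedBall x₀ r)) (hC : ∀ y ∈ closedBall x₀ r, ‖v y‖ ≤ C)
    (hr : 0 ≤ r) (hδ : 0 ≤ δ) (hCδ : C * δ ≤ r) :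
    ∃ f : ℝ → E, f t₀ = x₀ ∧ ∀ t ∈ Icc t₀ (t₀ + δ),
      f t ∈ closedBall x₀ r ∧ HasDerivWithinAt f (v (f t)) (Icc t₀ (t₀ + δ)) t := by
  set w := (closedBall x₀ r).indicator v
  have hC0 : 0 ≤ C := (norm_nonneg _).trans (hC x₀ (mem_closedBall_self hr))
  have hwC : ∀ y, ‖w y‖ ≤ C := fun y => by
    by_cases hy : y ∈ closedBall x₀ r
    · simpa [w, indicator_of_mem hy] using hC y hy
    · simpa [w, indicator_of_notMem hy] using hC0
  have hPL : IsPicardLindelof (fun _ => w) (tmin := t₀) (tmax := t₀ + δ)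
      ⟨t₀, left_mem_Icc.2 (by linarith)⟩ x₀ r.toNNReal 0 C.toNNReal K := by
    refine .of_time_independent (fun y _ => by simpa [hC0] using hwC y) ?_ ?_
    · rw [Real.coe_toNNReal _ hr]
      intro y hy z hz
      simpa only [w, indicator_of_mem hy, indicator_of_mem hz] using hv hy hz
    · simpa [Real.coe_toNNReal _ hr, Real.coe_toNNReal _ hC0, hδ] using hCδ
  obtain ⟨f, hf₀, hf⟩ := hPL.exists_eq_forall_mem_Icc_hasDerivWithinAt₀
  have hball : ∀ t ∈ Icc t₀ (t₀ + δ), f t ∈ closedBall x₀ r := fun t ht => by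
    have := (convex_Icc t₀ (t₀ + δ)).norm_image_sub_le_of_norm_hasDerivWithin_le hf
      (fun s _ => hwC (f s)) (left_mem_Icc.2 (by linarith)) ht
    rw [mem_closedBall, dist_eq_norm, ← hf₀]
    rw [Real.norm_of_nonneg (by linarith [ht.1])] at this
    nlinarith [ht.2]
  refine ⟨f, hf₀, fun t ht => ⟨hball t ht, ?_⟩⟩
  simpa [w, indicator_of_mem (hball t ht)] using hf t ht

theorem exists_extension_of_lipschitzOnWith {S : Set E} {r a T : ℝ} {x : ℝ → E}
    (hv : LipschitzOnWith K v S) (hS : Bornology.IsBounded S) (hr : 0 < r) (haT : a < T)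
    (hx : ∀ t ∈ Ico a T, HasDerivAt x (v (x t)) t)
    (hxS : ∀ᶠ t in 𝓝[<] T, closedBall (x t) r ⊆ S) :
    ∃ T' > T, ∃ y : ℝ → E, EqOn y x (Iio T) ∧ (∀ t ∈ Ico T T', y t ∈ S) ∧
      ∀ t ∈ Ico a T', HasDerivAt y (v (y t)) t := by
  obtain ⟨C, hC⟩ := hv.exists_norm_le_of_isBounded hS
  set δ := r / (|C| + 1)
  have hδ : 0 < δ := by positivity
  have hCδ : C * δ ≤ r := by
    calc C * δ ≤ |C| * δ := by gcongr; exact le_abs_self C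
      _ ≤ r := by
        rw [mul_div_assoc', div_le_iff₀ (by positivity)]
        nlinarith
  -- the local existence time `δ` does not depend on the starting point, so restarting
  -- within `δ` of `T` reaches beyond `T`
  obtain ⟨b, hbT, hb⟩ := mem_nhdsLT_iff_exists_Ioo_subset.1 hxS
  obtain ⟨t₀, ht₀, ht₀T⟩ := exists_between (max_lt (max_lt haT hbT) (sub_lt_self T hδ))
  simp only [max_lt_iff] at ht₀
  have hball : ∀ t ∈ Ico t₀ T, closedBall (x t) r ⊆ S := fun t ht =>
    hb ⟨by linarith [ht.1], ht.2⟩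
  obtain ⟨f, hf₀, hf⟩ := exists_hasDerivWithinAt_mem_closedBall (t₀ := t₀)
    (hv.mono (hball t₀ ⟨le_rfl, ht₀T⟩)) (fun y hy => hC y (hball t₀ ⟨le_rfl, ht₀T⟩ hy))
    hr.le hδ.le hCδ
  have hfS : ∀ t ∈ Icc t₀ (t₀ + δ), f t ∈ S := fun t ht =>
    hball t₀ ⟨le_rfl, ht₀T⟩ (hf t ht).1
  have hfx : EqOn f x (Ico t₀ T) := fun t ht => by
    have hsub : Icc t₀ t ⊆ Icc t₀ (t₀ + δ) := Icc_subset_Icc_right (by linarith [ht.2])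
    have hxa : Icc t₀ t ⊆ Ico a T := fun s hs => ⟨by linarith [hs.1], hs.2.trans_lt ht.2⟩
    refine ODE_solution_unique_of_mem_Icc_right (v := fun _ => v) (s := fun _ => S)
      (fun _ _ => hv) (fun s hs => (hf s (hsub hs)).2.continuousWithinAt.mono hsub)
      (fun s hs => (hf s (hsub (Ico_subset_Icc_self hs))).2.mono_of_mem_nhdsWithin
        (Icc_mem_nhdsGE_of_mem ⟨hs.1, by linarith [hs.2, ht.2]⟩))
      (fun s hs => hfS s (hsub (Ico_subset_Icc_self hs)))
      (fun s hs => (hx s (hxa hs)).continuousAt.continuousWithinAt)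
      (fun s hs => (hx s (hxa (Ico_subset_Icc_self hs))).hasDerivWithinAt)
      (fun s hs => hball s ⟨hs.1, hs.2.trans ht.2⟩ (mem_closedBall_self hr.le)) hf₀
      (right_mem_Icc.2 ht.1)
  set y := fun t => if t < t₀ then x t else f t
  have hyx : EqOn y x (Iio T) := fun t ht => by
    by_cases h : t < t₀
    · simp [y, h]
    · simpa [y, h] using hfx ⟨not_lt.1 h, ht⟩
  have hyf : EqOn y f (Ioi t₀) := fun t (ht : t₀ < t) => if_neg (not_lt.2 ht.le)
  refine ⟨t₀ + δ, by linarith, y, hyx, fun t ht => ?_, fun t ht => ?_⟩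
  · rw [hyf (by linarith [ht.1] : t₀ < t)]
    exact hfS t ⟨by linarith [ht.1], ht.2.le⟩
  by_cases htT : t < T
  · rw [hyx htT]
    exact (hx t ⟨ht.1, htT⟩).congr_of_eventuallyEq (eventuallyEq_of_mem (Iio_mem_nhds htT) hyx)
  · have ht₀t : t₀ < t := by linarith [not_lt.1 htT]
    rw [hyf ht₀t]
    exact ((hf t ⟨ht₀t.le, ht.2.le⟩).2.hasDerivAt (Icc_mem_nhds ht₀t ht.2)).congr_of_eventuallyEq
      (eventuallyEq_of_mem (Ioi_mem_nhds ht₀t) hyf)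

end ODE

open Finset in
theorem sum_mul_sum_erase_one_div_sub {ι : Type*} [DecidableEq ι] {s : Finset ι} {x : ι → ℝ}
    (hx : Set.InjOn x s) :
    ∑ i ∈ s, x i * ∑ j ∈ s.erase i, 1 / (x j - x i) = -((#s : ℝ) * (#s - 1)) / 2 := by
  have hpair : ∀ i ∈ s, ∀ j ∈ s,
      x i / (x j - x i) + x j / (x i - x j) = (if i = j then 1 else 0) - 1 := fun i hi j hj => by
    split_ifs with hij
    · simp [hij]
    · have : x j - x i ≠ 0 := sub_ne_zero.2 fun h => hij (hx hi hj h.symm)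
      rw [← neg_sub (x j), div_neg, ← sub_eq_add_neg, ← sub_div, div_eq_iff this]
      ring
  have hsymm : ∑ i ∈ s, ∑ j ∈ s, (x i / (x j - x i) + x j / (x i - x j))
      = 2 * ∑ i ∈ s, ∑ j ∈ s, x i / (x j - x i) := by
    simp only [sum_add_distrib]
    rw [sum_comm (f := fun i j => x j / (x i - x j))]
    ring
  rw [sum_congr rfl fun i hi => sum_congr rfl fun j hj => hpair i hi j hj] at hsymm
  simp only [sum_sub_distrib, sum_ite_eq, sum_ite_mem, inter_self, sum_const, nsmul_eq_mul,
    mul_one] at hsymm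
  -- the erased diagonal term is `x i / 0 = 0`, so it can be put back
  have herase : ∀ i ∈ s, x i * ∑ j ∈ s.erase i, 1 / (x j - x i) = ∑ j ∈ s, x i / (x j - x i) :=
    fun i _ => by simp only [mul_sum, mul_one_div]; exact sum_erase _ (by simp)
  rw [sum_congr rfl herase]
  linarith

open Finset in
theorem sum_mul_nearestNeighbour {N : ℕ} (hN1 : 1 ≤ N) {x : ℕ → ℝ}
    (hx : ∀ i, 1 ≤ i → i < N → x i ≠ x (i + 1)) :
    ∑ i ∈ Icc 1 N, x i * ((if i < N then -(1 / (x (i + 1) - x i)) else 0)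
      + (if 1 < i then 1 / (x i - x (i - 1)) else 0)) = N - 1 := by
  have hleft : (Icc 1 N).filter (· < N) = Ico 1 N := by
    ext; simp only [mem_filter, mem_Icc, mem_Ico]; omega
  have hright : (Icc 1 N).filter (1 < ·) = Ico (1 + 1) (N + 1) := by
    ext; simp only [mem_filter, mem_Icc, mem_Ico]; omega
  simp only [mul_add, sum_add_distrib, mul_ite, mul_zero]
  rw [← sum_filter, ← sum_filter, hleft, hright, ← sum_Ico_add', ← sum_add_distrib]
  simp only [add_tsub_cancel_right]
  rw [sum_congr rfl fun i hi => ?_, sum_const, Nat.card_Ico, nsmul_one, Nat.cast_sub hN1,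
    Nat.cast_one]
  have : x (i + 1) - x i ≠ 0 := sub_ne_zero.2 (hx i (mem_Ico.1 hi).1 (mem_Ico.1 hi).2).symm
  field_simp
  ring

theorem sum_mul_ksRHS {N : ℕ} (hN1 : 1 ≤ N) (χ : ℝ) {x : ℕ → ℝ}
    (hx : StrictMonoOn x (Set.Icc 1 N)) :
    ∑ i ∈ Finset.Icc 1 N, x i * ksRHS N χ x i = (N - 1) * (1 - χ * hN N * N) := by
  have hnn := sum_mul_nearestNeighbour hN1 (x := x) fun i h1 h2 =>
    (hx ⟨h1, h2.le⟩ ⟨by omega, h2⟩ (Nat.lt_succ_self i)).ne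
  have hint := sum_mul_sum_erase_one_div_sub (s := Finset.Icc 1 N) (x := x)
    (by simpa using hx.injOn)
  simp only [ksRHS, mul_add, Finset.sum_add_distrib] at hnn ⊢
  rw [hnn]
  simp only [mul_left_comm (x _) (2 * χ * hN N), ← Finset.mul_sum, hint, Nat.card_Icc,
    add_tsub_cancel_right]
  ring

theorem one_lt_mul_hN_mul {N : ℕ} (hN1 : 1 ≤ N) {χ : ℝ} (hχ : 1 + 1 / (N : ℝ) < χ) :
    1 < χ * hN N * N := by
  have hN0 : (0 : ℝ) < N := by exact_mod_cast hN1
  have h := mul_lt_mul_of_pos_right hχ hN0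
  rw [add_mul, one_div_mul_cancel hN0.ne'] at h
  rw [hN, mul_one_div, div_mul_eq_mul_div, one_lt_div (by positivity)]
  linarith

namespace IsKSSol

variable {N : ℕ} {χ T : ℝ} {X : ℕ → ℝ → ℝ}

theorem strictMonoOn (hX : IsKSSol N χ T X) {t : ℝ} (ht : t ∈ Set.Ico 0 T) :
    StrictMonoOn (fun i => X i t) (Set.Icc 1 N) :=
  strictMonoOn_of_lt_add_one Set.ordConnected_Icc fun i _ hi hi1 =>
    hX.ordered t ht i hi.1 (Nat.lt_of_succ_le hi1.2)

theorem hasDerivAt_sum_sq (hN1 : 1 ≤ N) (hX : IsKSSol N χ T X) {t : ℝ} (ht : t ∈ Set.Ico 0 T) :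
    HasDerivAt (fun s => ∑ j ∈ Finset.Icc 1 N, X j s ^ 2)
      (-(2 * ((N : ℝ) - 1) * (χ * hN N * N - 1))) t := by
  refine (HasDerivAt.fun_sum fun j hj => (hX.ode j hj t ht).fun_pow 2).congr_deriv ?_
  simp_rw [show 2 - 1 = 1 from rfl, pow_one, mul_assoc, ← Finset.mul_sum,
    sum_mul_ksRHS hN1 χ (hX.strictMonoOn ht)]
  ring

theorem sum_sq_eq (hN1 : 1 ≤ N) (hX : IsKSSol N χ T X) {t : ℝ} (ht : t ∈ Set.Ico 0 T) :
    ∑ j ∈ Finset.Icc 1 N, X j t ^ 2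
      = ∑ j ∈ Finset.Icc 1 N, X j 0 ^ 2 - 2 * ((N : ℝ) - 1) * (χ * hN N * N - 1) * t := by
  set c := 2 * ((N : ℝ) - 1) * (χ * hN N * N - 1)
  have hderiv : ∀ s ∈ Set.Ico 0 T,
      HasDerivAt (fun s => ∑ j ∈ Finset.Icc 1 N, X j s ^ 2 + c * s) 0 s := fun s hs => by
    refine ((hX.hasDerivAt_sum_sq hN1 hs).fun_add ((hasDerivAt_id' s).const_mul c)).congr_deriv ?_
    simp [c]
  have hsub : Set.Icc 0 t ⊆ Set.Ico 0 T := Set.Icc_subset_Ico_right ht.2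
  have := constant_of_has_deriv_right_zero
    (fun s hs => (hderiv s (hsub hs)).continuousAt.continuousWithinAt)
    (fun s hs => (hderiv s (hsub (Set.Ico_subset_Icc_self hs))).hasDerivWithinAt) t
    ⟨ht.1, le_rfl⟩
  simp only [mul_zero, add_zero] at this
  linarith

theorem abs_le_sqrt_sum_sq (hN1 : 1 ≤ N) (hχ : 1 + 1 / (N : ℝ) < χ) (hX : IsKSSol N χ T X) :
    ∀ i ∈ Finset.Icc 1 N, ∀ t ∈ Set.Ico (0 : ℝ) T,
      |X i t| ≤ √(∑ j ∈ Finset.Icc 1 N, X j 0 ^ 2) := fun i hi t ht => by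
  have hc : 0 ≤ 2 * ((N : ℝ) - 1) * (χ * hN N * N - 1) := by
    have : (1 : ℝ) ≤ N := by exact_mod_cast hN1
    have := one_lt_mul_hN_mul hN1 hχ
    positivity
  refine Real.abs_le_sqrt ((Finset.single_le_sum (fun j _ => sq_nonneg (X j t)) hi).trans ?_)
  rw [hX.sum_sq_eq hN1 ht]
  nlinarith [ht.1]

theorem le_sum_sq_div (hN2 : 2 ≤ N) (hχ : 1 + 1 / (N : ℝ) < χ) (hX : IsKSSol N χ T X) :
    T ≤ (∑ j ∈ Finset.Icc 1 N, X j 0 ^ 2) / (2 * ((N : ℝ) - 1) * (χ * hN N * N - 1)) := by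
  have hc : 0 < 2 * ((N : ℝ) - 1) * (χ * hN N * N - 1) := by
    have : (2 : ℝ) ≤ N := by exact_mod_cast hN2
    have := one_lt_mul_hN_mul (by omega) hχ
    nlinarith
  refine forall_lt_imp_le_iff_le_of_dense.1 fun t htT => ?_
  rcases lt_or_ge t 0 with ht | ht
  · exact ht.le.trans (by positivity)
  · have := hX.sum_sq_eq (by omega) ⟨ht, htT⟩
    rw [le_div_iff₀ hc]
    nlinarith [Finset.sum_nonneg fun j (_ : j ∈ Finset.Icc 1 N) => sq_nonneg (X j t)]

end IsKSSol

theorem ksRHS_congr (N : ℕ) (χ : ℝ) {x y : ℕ → ℝ} (h : ∀ j ∈ Finset.Icc 1 N, x j = y j) {i : ℕ}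
    (hi : i ∈ Finset.Icc 1 N) : ksRHS N χ x i = ksRHS N χ y i := by
  simp only [Finset.mem_Icc] at h hi
  unfold ksRHS
  rw [Finset.sum_congr rfl fun j hj => by
    rw [h j (Finset.mem_Icc.1 (Finset.mem_of_mem_erase hj)), h i hi]]
  congr 2
  · split_ifs with h₁
    · rw [h (i + 1) ⟨by omega, h₁⟩, h i hi]
    · rfl
  · split_ifs with h₁
    · rw [h (i - 1) ⟨by omega, by omega⟩, h i hi]
    · rfl

-- the values outside `{1,…,N}` are never read by `ksRHS`
def confOfFin (N : ℕ) (y : Fin N → ℝ) (n : ℕ) : ℝ := if h : n - 1 < N then y ⟨n - 1, h⟩ else 0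

def finOfConf (N : ℕ) (x : ℕ → ℝ) : Fin N → ℝ := fun k => x (k + 1)

@[simp]
theorem confOfFin_succ {N : ℕ} (y : Fin N → ℝ) (k : Fin N) : confOfFin N y (k + 1) = y k := by
  simp [confOfFin]

theorem confOfFin_finOfConf {N : ℕ} (x : ℕ → ℝ) {n : ℕ} (hn : n ∈ Finset.Icc 1 N) :
    confOfFin N (finOfConf N x) n = x n := by
  rw [Finset.mem_Icc] at hn
  simp only [confOfFin, finOfConf, dif_pos (show n - 1 < N by omega)]
  congr
  omega

theorem lipschitzWith_confOfFin (N n : ℕ) :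
    LipschitzWith 1 fun y : Fin N → ℝ => confOfFin N y n := by
  unfold confOfFin
  split_ifs with h
  · exact LipschitzWith.eval (α := fun _ : Fin N => ℝ) ⟨n - 1, h⟩
  · exact LipschitzWith.const' 0

def ksField (N : ℕ) (χ : ℝ) (y : Fin N → ℝ) : Fin N → ℝ := finOfConf N (ksRHS N χ (confOfFin N y))

def gapAtLeast (N : ℕ) (η : ℝ) : Set (Fin N → ℝ) :=
  {y | ∀ i, 1 ≤ i → i < N → η ≤ confOfFin N y (i + 1) - confOfFin N y i}

section gapAtLeast

variable {N : ℕ} {η : ℝ} {y : Fin N → ℝ}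

theorem le_abs_sub_of_mem_gapAtLeast (hη : 0 ≤ η) (hy : y ∈ gapAtLeast N η) {a b : ℕ}
    (ha : a ∈ Finset.Icc 1 N) (hb : b ∈ Finset.Icc 1 N) (hab : a ≠ b) :
    η ≤ |confOfFin N y a - confOfFin N y b| := by
  rw [Finset.mem_Icc] at ha hb
  rcases hab.lt_or_gt with h | h
  · rw [abs_sub_comm]
    exact (le_sub_of_forall_le_sub_add_one hη hy ha.1 h hb.2).trans (le_abs_self _)
  · exact (le_sub_of_forall_le_sub_add_one hη hy hb.1 h ha.2).trans (le_abs_self _)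

theorem closedBall_subset_gapAtLeast (hy : y ∈ gapAtLeast N η) (r : ℝ) :
    Metric.closedBall y r ⊆ gapAtLeast N (η - 2 * r) := fun z hz i h1 h2 => by
  have hmove : ∀ n, |confOfFin N z n - confOfFin N y n| ≤ r := fun n => by
    simpa [← Real.dist_eq] using (lipschitzWith_confOfFin N n).dist_le_mul_of_le hz
  have := hy i h1 h2
  have h₁ := abs_le.1 (hmove i)
  have h₂ := abs_le.1 (hmove (i + 1))
  linarith [h₁.1, h₁.2, h₂.1, h₂.2]

theorem exists_lipschitzOnWith_one_div_sub (hη : 0 < η) {a b : ℕ} (ha : a ∈ Finset.Icc 1 N)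
    (hb : b ∈ Finset.Icc 1 N) (hab : a ≠ b) :
    ∃ K, LipschitzOnWith K (fun y => 1 / (confOfFin N y a - confOfFin N y b)) (gapAtLeast N η) := by
  have := (lipschitzOnWith_inv_of_le_abs hη).comp
    ((lipschitzWith_confOfFin N a).sub (lipschitzWith_confOfFin N b)).lipschitzOnWith
    fun y hy => le_abs_sub_of_mem_gapAtLeast hη.le hy ha hb hab
  exact ⟨_, by simpa only [one_div, Function.comp_def] using this⟩

theorem exists_lipschitzOnWith_ksField (χ : ℝ) (hη : 0 < η) :
    ∃ K, LipschitzOnWith K (ksField N χ) (gapAtLeast N η) := by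
  refine exists_lipschitzOnWith_pi fun k => ?_
  have hi : (k : ℕ) + 1 ∈ Finset.Icc 1 N := Finset.mem_Icc.2 ⟨by omega, k.2⟩
  have hnext : ∃ K, LipschitzOnWith K (fun y => if (k : ℕ) + 1 < N then
      -(1 / (confOfFin N y (k + 1 + 1) - confOfFin N y (k + 1))) else 0) (gapAtLeast N η) := by
    by_cases h : (k : ℕ) + 1 < N
    · obtain ⟨K, hK⟩ := exists_lipschitzOnWith_one_div_sub (a := k + 1 + 1) hη
        (Finset.mem_Icc.2 ⟨by omega, h⟩) hi (by omega)
      exact ⟨K, by simpa only [h, if_true, Pi.neg_def] using hK.neg⟩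
    · exact ⟨0, by simpa only [h, if_false] using (LipschitzWith.const 0).lipschitzOnWith⟩
  have hprev : ∃ K, LipschitzOnWith K (fun y => if 1 < (k : ℕ) + 1 then
      1 / (confOfFin N y (k + 1) - confOfFin N y (k + 1 - 1)) else 0) (gapAtLeast N η) := by
    by_cases h : 1 < (k : ℕ) + 1
    · obtain ⟨K, hK⟩ := exists_lipschitzOnWith_one_div_sub (b := k + 1 - 1) hη hi
        (Finset.mem_Icc.2 ⟨by omega, by omega⟩) (by omega)
      exact ⟨K, by simpa only [h, if_true] using hK⟩
    · exact ⟨0, by simpa only [h, if_false] using (LipschitzWith.const 0).lipschitzOnWith⟩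
  obtain ⟨K₁, h₁⟩ := hnext
  obtain ⟨K₂, h₂⟩ := hprev
  obtain ⟨K₃, h₃⟩ := exists_lipschitzOnWith_finset_sum _ fun j hj =>
    exists_lipschitzOnWith_one_div_sub hη (Finset.mem_of_mem_erase hj) hi
      (Finset.ne_of_mem_erase hj)
  exact ⟨_, (h₁.add h₂).add ((lipschitzWith_smul (2 * χ * hN N)).comp_lipschitzOnWith h₃)⟩

end gapAtLeast

namespace IsKSSol

variable {N : ℕ} {χ T : ℝ} {X : ℕ → ℝ → ℝ}

theorem hasDerivAt_finOfConf (hX : IsKSSol N χ T X) {t : ℝ} (ht : t ∈ Set.Ico 0 T) :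
    HasDerivAt (fun s => finOfConf N fun j => X j s)
      (ksField N χ (finOfConf N fun j => X j t)) t := by
  refine hasDerivAt_pi.2 fun k => ?_
  have hk : (k : ℕ) + 1 ∈ Finset.Icc 1 N := Finset.mem_Icc.2 ⟨by omega, k.2⟩
  rw [ksField, finOfConf, ksRHS_congr N χ (fun j hj => confOfFin_finOfConf _ hj) hk]
  exact hX.ode _ hk t ht

theorem exists_extension (hX : IsKSSol N χ T X) (hT : 0 < T) {R ε : ℝ} (hε : 0 < ε)
    (hR : ∀ i ∈ Finset.Icc 1 N, ∀ t ∈ Set.Ico 0 T, |X i t| ≤ R)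
    (hgap : ∀ᶠ t in 𝓝[<] T, ∀ i, 1 ≤ i → i < N → ε ≤ X (i + 1) t - X i t) :
    ∃ T' > T, ∃ X' : ℕ → ℝ → ℝ,
      (∀ i ∈ Finset.Icc 1 N, ∀ t ∈ Set.Ico 0 T, X' i t = X i t) ∧ IsKSSol N χ T' X' := by
  set x : ℝ → Fin N → ℝ := fun t => finOfConf N fun j => X j t
  set S := gapAtLeast N (ε / 2) ∩ Metric.closedBall 0 (|R| + ε / 4)
  obtain ⟨K, hK⟩ := exists_lipschitzOnWith_ksField (N := N) χ (half_pos hε)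
  have hxS : ∀ᶠ t in 𝓝[<] T, Metric.closedBall (x t) (ε / 4) ⊆ S := by
    filter_upwards [hgap, Ioo_mem_nhdsLT hT] with t hgap ht z hz
    have hxt : x t ∈ gapAtLeast N ε := fun i h1 h2 => by
      simpa only [x, confOfFin_finOfConf _ (Finset.mem_Icc.2 ⟨h1, h2.le⟩),
        confOfFin_finOfConf _ (Finset.mem_Icc.2 ⟨h1.trans (Nat.le_succ i), h2⟩)] using hgap i h1 h2
    have hxR : ‖x t‖ ≤ |R| := (pi_norm_le_iff_of_nonneg (abs_nonneg R)).2 fun k =>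
      (hR _ (Finset.mem_Icc.2 ⟨by omega, k.2⟩) t (Set.Ioo_subset_Ico_self ht)).trans (le_abs_self R)
    refine ⟨by simpa [show ε - 2 * (ε / 4) = ε / 2 by ring] using
      closedBall_subset_gapAtLeast hxt _ hz, ?_⟩
    rw [mem_closedBall_zero_iff]
    have := mem_closedBall_iff_norm.1 hz
    linarith [norm_le_norm_add_norm_sub' z (x t)]
  obtain ⟨T', hT', y, hyx, hyS, hy⟩ := exists_extension_of_lipschitzOnWith
    (hK.mono Set.inter_subset_left) (Metric.isBounded_closedBall.subset Set.inter_subset_right)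
    (by positivity) hT (fun t ht => hX.hasDerivAt_finOfConf ht) hxS
  have hyX : ∀ i ∈ Finset.Icc 1 N, ∀ t < T, confOfFin N (y t) i = X i t := fun i hi t ht => by
    rw [hyx ht, confOfFin_finOfConf _ hi]
  refine ⟨T', hT', fun i t => confOfFin N (y t) i, fun i hi t ht => hyX i hi t ht.2, ⟨?_, ?_⟩⟩
  · intro t ht i h1 h2
    by_cases htT : t < T
    · rw [hyX i (Finset.mem_Icc.2 ⟨h1, h2.le⟩) t htT,
        hyX (i + 1) (Finset.mem_Icc.2 ⟨h1.trans (Nat.le_succ i), h2⟩) t htT]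
      exact hX.ordered t ⟨ht.1, htT⟩ i h1 h2
    · have := (hyS t ⟨not_lt.1 htT, ht.2⟩).1 i h1 h2
      linarith
  · intro i hi t ht
    rw [Finset.mem_Icc] at hi
    obtain ⟨k, rfl⟩ : ∃ k : Fin N, (k : ℕ) + 1 = i := ⟨⟨i - 1, by omega⟩, Nat.sub_add_cancel hi.1⟩
    simpa [ksField, finOfConf] using hasDerivAt_pi.1 (hy t ht) k

end IsKSSol

theorem IsMaxKSSol.exists_gapLiminfZero {N : ℕ} {χ T : ℝ} {X : ℕ → ℝ → ℝ}
    (hX : IsMaxKSSol N χ T X) (hT : 0 < T) {R : ℝ}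
    (hR : ∀ i ∈ Finset.Icc 1 N, ∀ t ∈ Set.Ico 0 T, |X i t| ≤ R) :
    ∃ i, 1 ≤ i ∧ i < N ∧ gapLiminfZero X T i := by
  by_contra! h
  have hIco : ∀ᶠ t in 𝓝[<] T, t ∈ Set.Ico 0 T :=
    mem_of_superset (Ioo_mem_nhdsLT hT) Set.Ioo_subset_Ico_self
  obtain ⟨ε, hε, hgap⟩ := Filter.exists_pos_eventually_forall_le (Finset.Ico 1 N) fun i hi => by
    obtain ⟨h1, h2⟩ := Finset.mem_Ico.1 hi
    refine Filter.exists_pos_eventually_le_of_liminf_ne_zero (B := 2 * R)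
      (hIco.mono fun t ht => sub_nonneg.2 (hX.1.ordered t ht i h1 h2).le)
      (hIco.mono fun t ht => ?_) (h i h1 h2)
    have hi := abs_le.1 (hR i (Finset.mem_Icc.2 ⟨h1, h2.le⟩) t ht)
    have hi1 := abs_le.1 (hR (i + 1) (Finset.mem_Icc.2 ⟨h1.trans (Nat.le_succ i), h2⟩) t ht)
    linarith [hi.1, hi1.2]
  obtain ⟨T', hT', X', hXX', hX'⟩ := hX.1.exists_extension hT hε hR
    (hgap.mono fun t ht i h1 h2 => ht i (Finset.mem_Ico.2 ⟨h1, h2⟩))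
  exact hX.2 T' hT' X' hXX' hX'

theorem IsWeakCand.subset_Icc {N : ℕ} {X : ℕ → ℝ → ℝ} {T : ℝ} {I : Finset ℕ}
    (hI : IsWeakCand N X T I) : I ⊆ Finset.Icc 1 N := by
  obtain ⟨-, ⟨a, b, ha, hb, rfl⟩, -⟩ := hI
  exact Finset.Icc_subset_Icc ha hb

theorem exists_isWeakBlowup {N : ℕ} {X : ℕ → ℝ → ℝ} {T : ℝ} {i : ℕ} (h1 : 1 ≤ i) (h2 : i < N)
    (hi : gapLiminfZero X T i) : ∃ I, IsWeakBlowup N X T I := by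
  classical
  have hcand : IsWeakCand N X T (Finset.Icc i (i + 1)) :=
    ⟨⟨i, by simp⟩, ⟨i, i + 1, h1, h2, rfl⟩, fun j hj hj1 => by
      obtain rfl : j = i := by simp only [Finset.mem_Icc] at hj hj1; omega
      exact hi⟩
  obtain ⟨I, hI⟩ :=
    Finset.exists_maximal (s := {J ∈ (Finset.Icc 1 N).powerset | IsWeakCand N X T J})
    ⟨_, Finset.mem_filter.2 ⟨Finset.mem_powerset.2 hcand.subset_Icc, hcand⟩⟩
  refine ⟨I, (Finset.mem_filter.1 hI.prop).2, fun J hJ hIJ => (hI.eq_of_le ?_ hIJ).symm⟩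
  exact Finset.mem_filter.2 ⟨Finset.mem_powerset.2 hJ.subset_Icc, hJ⟩

/-- for `χ > χ_N = 1 + 1/N` and any maximal solution on `[0,T)`:
(i) all particles are bounded by the initial second moment;
(ii) `T ≤ Π²(0)/(2(N-1)(χ h_N N - 1))` (in particular `T` is finite);
(iii) some consecutive gap has liminf zero at `T`; in particular a weak blow-up set exists. -/
theorem stmt2 (N : ℕ) (hN2 : 2 ≤ N) (χ T : ℝ) (hχ : 1 + 1 / (N : ℝ) < χ) (hT : 0 < T)
    (X : ℕ → ℝ → ℝ) (hX : IsMaxKSSol N χ T X) :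
    (∀ i ∈ Finset.Icc 1 N, ∀ t ∈ Set.Ico (0 : ℝ) T,
        |X i t| ≤ Real.sqrt (∑ j ∈ Finset.Icc 1 N, (X j 0) ^ 2)) ∧
      T ≤ (∑ j ∈ Finset.Icc 1 N, (X j 0) ^ 2) /
          (2 * ((N : ℝ) - 1) * (χ * hN N * N - 1)) ∧
      (∃ i, 1 ≤ i ∧ i < N ∧ gapLiminfZero X T i) ∧
      ∃ I : Finset ℕ, IsWeakBlowup N X T I := by
  have hbound := hX.1.abs_le_sqrt_sum_sq (by omega) hχ
  obtain ⟨i, h1, h2, hi⟩ := hX.exists_gapLiminfZero hT hbound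
  exact ⟨hbound, hX.1.le_sum_sq_div hN2 hχ, ⟨i, h1, h2, hi⟩, exists_isWeakBlowup h1 h2 hi⟩
end
end

section
/- Let Y be the parabolically rescaled solution associated with a weak blow-up set I = [l, l+k−1] of k particles. Then for all indices q < p with q, p ∈ I and all τ ≥ 0: |(1/2) d/dτ P²_{q,p}(τ) − α_{q,p} − α P²_{q,p}(τ)| ≤ (2 + 2χ/√N) √(P²_{q,p}(τ) · 𝓗_{q,p,2}(τ)), where α_{q,p} = (p−q)(1 − χ(p−q+1)/(N+1)). -/
open Filter

noncomputable section

open Finset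

/-! The time change satisfies `t'(τ) = R(τ)²` and `R' = -αR`, and all forces are homogeneous of
degree `-1`, so the rescaled particles obey the original system plus the confining drift `αY`.
Hence `½ d/dτ P²_{q,p} = ∑ (Y_i - Ȳ_{q,p}) Y_i'`. Summing by parts, the nearest-neighbour forces
give `p - q` plus one boundary term at each end of `[q,p]`; the interactions inside `[q,p]` cancel
in pairs to `-χ(p-q)(p-q+1)/(N+1)`; the drift gives `αP²_{q,p}`. What remains, the two boundary
terms and the interaction with the particles outside `[q,p]`, is bounded by Cauchy–Schwarz by
`P_{q,p} √𝓗_{q,p,2}`, resp. `(2χ/√N) P_{q,p} √𝓗_{q,p,2}`. -/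

lemma sum_sub_meanOn_eq_zero (s : Finset ℕ) (y : ℕ → ℝ) : ∑ i ∈ s, (y i - meanOn s y) = 0 := by
  rcases s.eq_empty_or_nonempty with rfl | hs
  · simp
  rw [sum_sub_distrib, sum_const, nsmul_eq_mul, meanOn,
    mul_div_cancel₀ _ (by simpa using hs.ne_empty), sub_self]

lemma sum_sub_meanOn_mul_self_eq_var2 (s : Finset ℕ) (y : ℕ → ℝ) :
    ∑ i ∈ s, (y i - meanOn s y) * y i = var2 s y := by
  calc ∑ i ∈ s, (y i - meanOn s y) * y i
        = ∑ i ∈ s, ((y i - meanOn s y) ^ 2 + meanOn s y * (y i - meanOn s y)) :=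
          sum_congr rfl fun _ _ => by ring
    _ = var2 s y := by
      rw [sum_add_distrib, ← mul_sum, sum_sub_meanOn_eq_zero, mul_zero, add_zero, var2]

lemma var2_nonneg (s : Finset ℕ) (y : ℕ → ℝ) : 0 ≤ var2 s y :=
  sum_nonneg fun _ _ => sq_nonneg _

lemma abs_sub_meanOn_le_sqrt_var2 {s : Finset ℕ} {i : ℕ} (y : ℕ → ℝ) (hi : i ∈ s) :
    |y i - meanOn s y| ≤ √(var2 s y) :=
  Real.abs_le_sqrt <| single_le_sum (f := fun j => (y j - meanOn s y) ^ 2)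
    (fun _ _ => sq_nonneg _) hi

lemma hasDerivAt_var2 {s : Finset ℕ} {Y : ℕ → ℝ → ℝ} {Y' : ℕ → ℝ} {τ : ℝ}
    (h : ∀ i ∈ s, HasDerivAt (Y i) (Y' i) τ) :
    HasDerivAt (fun σ => var2 s (fun i => Y i σ))
      (2 * ∑ i ∈ s, (Y i τ - meanOn s (fun i => Y i τ)) * Y' i) τ := by
  have hmean : HasDerivAt (fun σ => meanOn s (fun i => Y i σ)) (meanOn s Y') τ :=
    (HasDerivAt.fun_sum h).div_const _
  refine (HasDerivAt.fun_sum fun i hi => ((h i hi).fun_sub hmean).fun_pow 2).congr_deriv ?_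
  set m := meanOn s fun i => Y i τ
  have hexpand : ∀ i ∈ s, ((2 : ℕ) : ℝ) * (Y i τ - m) ^ (2 - 1) * (Y' i - meanOn s Y')
      = 2 * ((Y i τ - m) * Y' i) - 2 * meanOn s Y' * (Y i τ - m) := fun _ _ => by ring
  rw [sum_congr rfl hexpand, sum_sub_distrib, ← mul_sum, ← mul_sum, sum_sub_meanOn_eq_zero,
    mul_zero, sub_zero]

lemma abs_one_div_sub_le_sqrt_extPot {N : ℕ} {s : Finset ℕ} {i j : ℕ} (y : ℕ → ℝ)
    (hj : j ∈ Icc 1 N \ s) (hi : i ∈ s) :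
    |1 / (y j - y i)| ≤ √(extPot N s 2 y) := by
  refine Real.abs_le_sqrt ?_
  calc (1 / (y j - y i)) ^ 2 = 1 / (y j - y i) ^ 2 := by rw [div_pow, one_pow]
    _ ≤ ∑ i' ∈ s, 1 / (y j - y i') ^ 2 :=
        single_le_sum (f := fun i' => 1 / (y j - y i') ^ 2) (fun _ _ => by positivity) hi
    _ ≤ extPot N s 2 y :=
        single_le_sum (f := fun j' => ∑ i' ∈ s, 1 / (y j' - y i') ^ 2)
          (fun _ _ => sum_nonneg fun _ _ => by positivity) hj

lemma abs_sum_sum_sub_meanOn_div_sub_le {N : ℕ} {s : Finset ℕ} (y : ℕ → ℝ) :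
    |∑ i ∈ s, ∑ j ∈ Icc 1 N \ s, (y i - meanOn s y) / (y j - y i)|
      ≤ √N * √(var2 s y * extPot N s 2 y) := by
  set O := Icc 1 N \ s
  have hcs := sum_mul_sq_le_sq_mul_sq (s ×ˢ O) (fun ij => y ij.1 - meanOn s y)
    (fun ij => 1 / (y ij.2 - y ij.1))
  simp only [sum_product, sum_const, nsmul_eq_mul, div_pow, one_pow, mul_one_div] at hcs
  have hO : (O.card : ℝ) ≤ N := by
    exact_mod_cast (card_le_card sdiff_subset).trans (Nat.card_Icc 1 N).le
  rw [← Real.sqrt_mul (Nat.cast_nonneg N)]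
  refine Real.abs_le_sqrt (hcs.trans ?_)
  rw [sum_comm (s := s), ← extPot, ← mul_sum, ← var2, ← mul_assoc]
  exact mul_le_mul_of_nonneg_right (mul_le_mul_of_nonneg_right hO (sum_nonneg fun _ _ =>
    sq_nonneg _)) (sum_nonneg fun _ _ => sum_nonneg fun _ _ => by positivity)

/-- Antisymmetrising in `i, j`, each unordered pair contributes `(y i - y j) / (y j - y i) = -1`. -/
lemma sum_sum_sub_div_sub {s : Finset ℕ} {y : ℕ → ℝ} (hy : Set.InjOn y s) (c : ℝ) :
    ∑ i ∈ s, ∑ j ∈ s, (y i - c) / (y j - y i) = -((s.card : ℝ) * (s.card - 1)) / 2 := by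
  have hpair : ∀ i ∈ s, ∀ j ∈ s,
      (y i - c) / (y j - y i) + (y j - c) / (y i - y j) = -1 + if i = j then 1 else 0 := by
    intro i hi j hj
    split_ifs with hij
    · simp [hij]
    · have : y j - y i ≠ 0 := sub_ne_zero.2 fun h => hij (hy hi hj h.symm)
      rw [← neg_sub (y j), div_neg, ← sub_eq_add_neg, ← sub_div, sub_sub_sub_cancel_right,
        ← neg_sub, neg_div, div_self this, add_zero]
  have htwice : 2 * ∑ i ∈ s, ∑ j ∈ s, (y i - c) / (y j - y i)
      = ∑ i ∈ s, ∑ j ∈ s, (-1 + if i = j then (1 : ℝ) else 0) := by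
    rw [two_mul]
    nth_rewrite 2 [sum_comm]
    rw [← sum_add_distrib]
    exact sum_congr rfl fun i hi => by
      rw [← sum_add_distrib]; exact sum_congr rfl fun j hj => hpair i hi j hj
  have hcount : ∑ i ∈ s, ∑ j ∈ s, (-1 + if i = j then (1 : ℝ) else 0)
      = -((s.card : ℝ) * (s.card - 1)) := by
    simp only [sum_add_distrib, sum_ite_eq, sum_const, nsmul_eq_mul]
    rw [sum_congr rfl fun i hi => by rw [if_pos hi]]
    simp only [sum_const, nsmul_eq_mul]
    ring
  linarith

/-- The diagonal term `j = i` may be added back since `(y i - c) / 0 = 0`. -/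
lemma sum_sub_mul_sum_erase_one_div_sub {N : ℕ} {s : Finset ℕ} {y : ℕ → ℝ}
    (hs : s ⊆ Icc 1 N) (hy : Set.InjOn y s) (c : ℝ) :
    ∑ i ∈ s, (y i - c) * ∑ j ∈ (Icc 1 N).erase i, 1 / (y j - y i)
      = ∑ i ∈ s, ∑ j ∈ Icc 1 N \ s, (y i - c) / (y j - y i)
        - (s.card : ℝ) * (s.card - 1) / 2 := by
  have hsplit : ∀ i ∈ s, (y i - c) * ∑ j ∈ (Icc 1 N).erase i, 1 / (y j - y i)
      = ∑ j ∈ Icc 1 N \ s, (y i - c) / (y j - y i) + ∑ j ∈ s, (y i - c) / (y j - y i) := by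
    intro i _
    rw [sum_erase _ (by simp), mul_sum, ← sum_sdiff hs]
    simp only [mul_one_div]
  rw [sum_congr rfl hsplit, sum_add_distrib, sum_sum_sub_div_sub hy]
  ring

def invGap (N : ℕ) (y : ℕ → ℝ) (i : ℕ) : ℝ :=
  if 1 ≤ i ∧ i < N then 1 / (y (i + 1) - y i) else 0

lemma ksRHS_eq_invGap {N : ℕ} (χ : ℝ) (y : ℕ → ℝ) {i : ℕ} (hi : i ∈ Icc 1 N) :
    ksRHS N χ y i = invGap N y (i - 1) - invGap N y i
      + 2 * χ * hN N * ∑ j ∈ (Icc 1 N).erase i, 1 / (y j - y i) := by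
  rw [mem_Icc] at hi
  have hi1 : i - 1 + 1 = i := Nat.sub_add_cancel hi.1
  simp only [ksRHS, invGap, hi1, hi.1, true_and, and_true, show i - 1 < N by omega,
    show 1 ≤ i - 1 ↔ 1 < i by omega]
  split_ifs <;> ring

lemma sum_Icc_mul_sub_by_parts (a g : ℕ → ℝ) {q p : ℕ} (hqp : q ≤ p) :
    ∑ i ∈ Icc q p, a i * (g (i - 1) - g i)
      = a q * g (q - 1) - a p * g p + ∑ i ∈ Ico q p, (a (i + 1) - a i) * g i := by
  induction p, hqp using Nat.le_induction with
  | base => simp; ring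
  | succ p hqp ih =>
    rw [sum_Icc_succ_top (by omega), ih, sum_Ico_succ_top hqp, Nat.add_sub_cancel]
    ring

lemma sum_sub_mul_invGap_sub {N q p : ℕ} {y : ℕ → ℝ} (hy : StrictMonoOn y (Set.Icc 1 N))
    (hq : 1 ≤ q) (hqp : q ≤ p) (hpN : p ≤ N) (c : ℝ) :
    ∑ i ∈ Icc q p, (y i - c) * (invGap N y (i - 1) - invGap N y i)
      = (p - q) + ((y q - c) * invGap N y (q - 1) - (y p - c) * invGap N y p) := by
  have hunit : ∀ i ∈ Ico q p, (y (i + 1) - c - (y i - c)) * invGap N y i = 1 := by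
    intro i hi
    rw [mem_Ico] at hi
    have hlt : y i < y (i + 1) :=
      hy ⟨by omega, by omega⟩ ⟨by omega, by omega⟩ (Nat.lt_succ_self i)
    rw [invGap, if_pos ⟨by omega, by omega⟩, sub_sub_sub_cancel_right,
      mul_one_div_cancel (sub_ne_zero.2 hlt.ne')]
  rw [sum_Icc_mul_sub_by_parts _ _ hqp, sum_congr rfl hunit, sum_const, Nat.card_Ico,
    nsmul_one, Nat.cast_sub hqp]
  ring

lemma abs_invGap_le_sqrt_extPot {N : ℕ} {s : Finset ℕ} {i : ℕ} (y : ℕ → ℝ)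
    (hs : i ∈ s ↔ i + 1 ∉ s) : |invGap N y i| ≤ √(extPot N s 2 y) := by
  unfold invGap
  split_ifs with hi
  · by_cases his : i ∈ s
    · exact abs_one_div_sub_le_sqrt_extPot y (by simp [hs.1 his]; omega) his
    · rw [abs_div, abs_sub_comm, ← abs_div]
      exact abs_one_div_sub_le_sqrt_extPot y (by simp [his]; omega) (not_not.1 (mt hs.2 his))
  · rw [abs_zero]
    exact Real.sqrt_nonneg _

lemma abs_sub_meanOn_mul_invGap_le {N : ℕ} {s : Finset ℕ} {i j : ℕ} (y : ℕ → ℝ) (hi : i ∈ s)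
    (hj : j ∈ s ↔ j + 1 ∉ s) :
    |(y i - meanOn s y) * invGap N y j| ≤ √(var2 s y * extPot N s 2 y) := by
  rw [abs_mul, Real.sqrt_mul (var2_nonneg s y)]
  exact mul_le_mul (abs_sub_meanOn_le_sqrt_var2 y hi) (abs_invGap_le_sqrt_extPot y hj)
    (abs_nonneg _) (Real.sqrt_nonneg _)

lemma sum_sub_meanOn_mul_ksRHS {N q p : ℕ} (χ : ℝ) {y : ℕ → ℝ}
    (hy : StrictMonoOn y (Set.Icc 1 N)) (hq : 1 ≤ q) (hqp : q ≤ p) (hpN : p ≤ N) :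
    ∑ i ∈ Icc q p, (y i - meanOn (Icc q p) y) * ksRHS N χ y i
      = (p - q) * (1 - χ * (p - q + 1) / (N + 1))
        + ((y q - meanOn (Icc q p) y) * invGap N y (q - 1)
          - (y p - meanOn (Icc q p) y) * invGap N y p
          + 2 * χ * hN N * ∑ i ∈ Icc q p, ∑ j ∈ Icc 1 N \ Icc q p,
              (y i - meanOn (Icc q p) y) / (y j - y i)) := by
  set s := Icc q p
  set m := meanOn s y
  have hs : s ⊆ Icc 1 N := Icc_subset_Icc hq hpN
  have hcard : (s.card : ℝ) = p - q + 1 := by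
    rw [Nat.card_Icc, Nat.cast_sub (by omega)]; push_cast; ring
  have hsplit : ∀ i ∈ s, (y i - m) * ksRHS N χ y i
      = (y i - m) * (invGap N y (i - 1) - invGap N y i)
        + 2 * χ * hN N * ((y i - m) * ∑ j ∈ (Icc 1 N).erase i, 1 / (y j - y i)) := by
    intro i hi
    rw [ksRHS_eq_invGap χ y (hs hi)]
    ring
  rw [sum_congr rfl hsplit, sum_add_distrib, ← mul_sum, sum_sub_mul_invGap_sub hy hq hqp hpN,
    sum_sub_mul_sum_erase_one_div_sub hs (hy.injOn.mono (by rw [← coe_Icc]; exact coe_subset.2 hs)),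
    hcard, hN]
  field_simp
  ring

lemma abs_sum_sub_meanOn_mul_ksRHS_sub_le {N q p : ℕ} {χ : ℝ} {y : ℕ → ℝ} (hχ : 0 ≤ χ)
    (hy : StrictMonoOn y (Set.Icc 1 N)) (hq : 1 ≤ q) (hqp : q ≤ p) (hpN : p ≤ N) :
    |∑ i ∈ Icc q p, (y i - meanOn (Icc q p) y) * ksRHS N χ y i
        - (p - q) * (1 - χ * (p - q + 1) / (N + 1))|
      ≤ (2 + 2 * χ / √N) * √(var2 (Icc q p) y * extPot N (Icc q p) 2 y) := by
  set s := Icc q p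
  set m := meanOn s y
  have hNpos : (0 : ℝ) < N := by exact_mod_cast (show 0 < N by omega)
  have hbottom := abs_sub_meanOn_mul_invGap_le (N := N) (s := s) y (i := q) (j := q - 1)
    (by simp [s]; omega) (by simp [s]; omega)
  have htop := abs_sub_meanOn_mul_invGap_le (N := N) (s := s) y (i := p) (j := p)
    (by simp [s]; omega) (by simp [s]; omega)
  have hext : |2 * χ * hN N * ∑ i ∈ s, ∑ j ∈ Icc 1 N \ s, (y i - m) / (y j - y i)|
      ≤ 2 * χ / √N * √(var2 s y * extPot N s 2 y) := by
    have hcoef : 2 * χ * hN N * √N ≤ 2 * χ / √N := by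
      rw [hN, le_div_iff₀ (Real.sqrt_pos.2 hNpos), mul_assoc, Real.mul_self_sqrt hNpos.le,
        mul_assoc]
      exact mul_le_of_le_one_right (by positivity)
        (by rw [one_div_mul_eq_div, div_le_one (by positivity)]; linarith)
    rw [abs_mul, abs_of_nonneg (by rw [hN]; positivity)]
    calc _ ≤ 2 * χ * hN N * (√N * √(var2 s y * extPot N s 2 y)) :=
          mul_le_mul_of_nonneg_left (abs_sum_sum_sub_meanOn_div_sub_le y) (by rw [hN]; positivity)
      _ ≤ _ := by rw [← mul_assoc]; gcongr
  rw [sum_sub_meanOn_mul_ksRHS χ hy hq hqp hpN, add_sub_cancel_left]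
  calc _ ≤ |(y q - m) * invGap N y (q - 1)| + |(y p - m) * invGap N y p|
        + |2 * χ * hN N * ∑ i ∈ s, ∑ j ∈ Icc 1 N \ s, (y i - m) / (y j - y i)| :=
        (abs_add_le _ _).trans (by gcongr; exact abs_sub _ _)
    _ ≤ _ := by linarith

lemma ksRHS_sub_div (N : ℕ) (χ b R : ℝ) (x : ℕ → ℝ) (i : ℕ) :
    ksRHS N χ (fun j => (x j - b) / R) i = R * ksRHS N χ x i := by
  have hgap : ∀ u v : ℝ, 1 / ((u - b) / R - (v - b) / R) = R * (1 / (u - v)) := fun u v => by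
    rw [div_sub_div_same, sub_sub_sub_cancel_right, one_div_div, mul_one_div]
  simp only [ksRHS, hgap, ← mul_sum]
  split_ifs <;> ring

lemma HasDerivAt.parabolic_rescale {x t R : ℝ → ℝ} {v α b τ : ℝ}
    (hx : HasDerivAt x v (t τ)) (ht : HasDerivAt t (R τ ^ 2) τ)
    (hR : HasDerivAt R (-α * R τ) τ) (hR0 : R τ ≠ 0) :
    HasDerivAt (fun σ => (x (t σ) - b) / R σ) (R τ * v + α * ((x (t τ) - b) / R τ)) τ := by
  refine (((hx.comp τ ht).sub_const b).fun_div hR hR0).congr_deriv ?_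
  simp only [Function.comp_apply]
  field_simp
  ring

lemma parabolicTime_mem_Ico {T α τ : ℝ} (hT : 0 < T) (hα : 0 ≤ α) (hτ : 0 ≤ τ) :
    T * (1 - Real.exp (-2 * α * τ)) ∈ Set.Ico 0 T := by
  have hexp : Real.exp (-2 * α * τ) ≤ 1 := Real.exp_le_one_iff.2 (by nlinarith)
  exact ⟨mul_nonneg hT.le (by linarith),
    mul_lt_of_lt_one_right hT (by linarith [Real.exp_pos (-2 * α * τ)])⟩

lemma IsKSSol.strictMonoOn_s8 {N : ℕ} {χ T : ℝ} {X : ℕ → ℝ → ℝ} (hX : IsKSSol N χ T X) {t : ℝ}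
    (ht : t ∈ Set.Ico 0 T) : StrictMonoOn (fun i => X i t) (Set.Icc 1 N) :=
  strictMonoOn_of_lt_add_one Set.ordConnected_Icc fun i _ hi hi' =>
    hX.ordered t ht i hi.1 hi'.2

lemma IsKSSol.hasDerivAt_parabolic_rescale {N : ℕ} {χ T α b : ℝ} {X Y : ℕ → ℝ → ℝ}
    (hX : IsKSSol N χ T X) (hT : 0 < T) (hα : 0 < α)
    (hY : ∀ i τ, Y i τ = (X i (T * (1 - Real.exp (-2 * α * τ))) - b) /
      (√(2 * α * T) * Real.exp (-α * τ)))
    {τ : ℝ} (hτ : 0 ≤ τ) {i : ℕ} (hi : i ∈ Icc 1 N) :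
    HasDerivAt (Y i) (ksRHS N χ (fun j => Y j τ) i + α * Y i τ) τ := by
  have hR0 : √(2 * α * T) * Real.exp (-α * τ) ≠ 0 := by positivity
  have ht : HasDerivAt (fun σ => T * (1 - Real.exp (-2 * α * σ)))
      ((√(2 * α * T) * Real.exp (-α * τ)) ^ 2) τ := by
    refine ((((hasDerivAt_id τ).const_mul (-2 * α)).exp.const_sub 1).const_mul T).congr_deriv ?_
    rw [id, mul_pow, Real.sq_sqrt (by positivity), sq, ← Real.exp_add]
    ring_nf
  have hR : HasDerivAt (fun σ => √(2 * α * T) * Real.exp (-α * σ))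
      (-α * (√(2 * α * T) * Real.exp (-α * τ))) τ :=
    (((hasDerivAt_id τ).const_mul (-α)).exp.const_mul _).congr_deriv (by simp; ring)
  have hyτ : (fun j => Y j τ) = fun j => (X j (T * (1 - Real.exp (-2 * α * τ))) - b) /
      (√(2 * α * T) * Real.exp (-α * τ)) := funext fun j => hY j τ
  rw [hyτ, ksRHS_sub_div, hY i τ, show Y i = _ from funext (hY i)]
  exact (hX.ode i hi _ (parabolicTime_mem_Ico hT hα.le hτ)).parabolic_rescale
    (t := fun σ => T * (1 - Real.exp (-2 * α * σ)))
    (R := fun σ => √(2 * α * T) * Real.exp (-α * σ)) ht hR hR0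

/-- `τ ↦ T(1 - e^{-2ατ})` is the inverse of `τ(t)`, and `√(2αT) e^{-ατ} = R(t(τ))`. -/
theorem stmt8_general (N k : ℕ) (hk : 2 ≤ k)
    (χ T : ℝ) (hχ1 : ((N : ℝ) + 1) / k < χ)
    (hT : 0 < T)
    (X : ℕ → ℝ → ℝ) (hX : IsKSSol N χ T X)
    (l : ℕ) (hl : 1 ≤ l) (hlk : l + k - 1 ≤ N)
    (α : ℝ) (hα : α = ((k : ℝ) - 1) * (χ * k / ((N : ℝ) + 1) - 1))
    (Xbar : ℝ)
    (Y : ℕ → ℝ → ℝ)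
    (hY : ∀ i τ, Y i τ =
      (X i (T * (1 - Real.exp (-2 * α * τ))) - Xbar) /
        (Real.sqrt (2 * α * T) * Real.exp (-α * τ)))
    (q p : ℕ) (hq : q ∈ Finset.Icc l (l + k - 1)) (hp : p ∈ Finset.Icc l (l + k - 1))
    (hqp : q < p) (τ : ℝ) (hτ : 0 ≤ τ) :
    |(1 / 2) * deriv (fun σ => var2 (Finset.Icc q p) (fun i => Y i σ)) τ
        - ((p : ℝ) - q) * (1 - χ * ((p : ℝ) - q + 1) / ((N : ℝ) + 1))
        - α * var2 (Finset.Icc q p) (fun i => Y i τ)|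
      ≤ (2 + 2 * χ / Real.sqrt N) *
        Real.sqrt (var2 (Finset.Icc q p) (fun i => Y i τ)
          * extPot N (Finset.Icc q p) 2 (fun i => Y i τ)) := by
  rw [mem_Icc] at hq hp
  have hk0 : (0 : ℝ) < k := by positivity
  have hχ : 0 < χ := (by positivity : (0 : ℝ) < (N + 1) / k).trans hχ1
  have hα0 : 0 < α := by
    have hk2 : (2 : ℝ) ≤ k := by exact_mod_cast hk
    rw [div_lt_iff₀ hk0] at hχ1
    rw [hα]
    exact mul_pos (by linarith)
      (by rw [sub_pos, lt_div_iff₀ (by positivity)]; linarith)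
  have hmono : StrictMonoOn (fun i => Y i τ) (Set.Icc 1 N) := fun i hi j hj hij => by
    simp only [hY]
    exact div_lt_div_of_pos_right (sub_lt_sub_right
      (hX.strictMonoOn_s8 (parabolicTime_mem_Ico hT hα0.le hτ) hi hj hij) _) (by positivity)
  have hderiv : ∀ i ∈ Icc q p, HasDerivAt (Y i) (ksRHS N χ (fun j => Y j τ) i + α * Y i τ) τ :=
    fun i hi => hX.hasDerivAt_parabolic_rescale hT hα0 hY hτ
      (Icc_subset_Icc (hl.trans hq.1) (hp.2.trans hlk) hi)
  rw [(hasDerivAt_var2 hderiv).deriv]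
  simp only [mul_add, sum_add_distrib, mul_left_comm _ α, ← mul_sum,
    sum_sub_meanOn_mul_self_eq_var2]
  convert abs_sum_sub_meanOn_mul_ksRHS_sub_le hχ.le hmono (hl.trans hq.1) hqp.le (hp.2.trans hlk)
    using 2
  ring

/-- evolution estimate for the variance `P²_{q,p}` of the parabolically
rescaled solution `Y_i(τ(t)) = (X_i(t) - X̄)/√(2α(T-t))` associated with a weak blow-up
set `I = [l, l+k-1]`.  Here `t(τ) = T(1 - e^{-2ατ})` and `√(2α(T-t(τ))) = √(2αT) e^{-ατ}`. -/
theorem stmt8 (N k : ℕ) (hN2 : 2 ≤ N) (hk : 2 ≤ k) (hkN : k ≤ N)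
    (χ T : ℝ) (hχ1 : ((N : ℝ) + 1) / k < χ) (hχ2 : χ < ((N : ℝ) + 1) / ((k : ℝ) - 1))
    (hT : 0 < T)
    (X : ℕ → ℝ → ℝ) (hX : IsKSSol N χ T X)
    (l : ℕ) (hl : 1 ≤ l) (hlk : l + k - 1 ≤ N)
    (hI : IsWeakBlowup N X T (Finset.Icc l (l + k - 1)))
    (α : ℝ) (hα : α = ((k : ℝ) - 1) * (χ * k / ((N : ℝ) + 1) - 1))
    (Xbar : ℝ)
    (hXbar : Filter.Tendsto (fun t => (∑ i ∈ Finset.Icc l (l + k - 1), X i t) / (k : ℝ))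
      (nhdsWithin T (Set.Iio T)) (nhds Xbar))
    (Y : ℕ → ℝ → ℝ)
    (hY : ∀ i τ, Y i τ =
      (X i (T * (1 - Real.exp (-2 * α * τ))) - Xbar) /
        (Real.sqrt (2 * α * T) * Real.exp (-α * τ)))
    (q p : ℕ) (hq : q ∈ Finset.Icc l (l + k - 1)) (hp : p ∈ Finset.Icc l (l + k - 1))
    (hqp : q < p) (τ : ℝ) (hτ : 0 ≤ τ) :
    |(1 / 2) * deriv (fun σ => var2 (Finset.Icc q p) (fun i => Y i σ)) τ
        - ((p : ℝ) - q) * (1 - χ * ((p : ℝ) - q + 1) / ((N : ℝ) + 1))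
        - α * var2 (Finset.Icc q p) (fun i => Y i τ)|
      ≤ (2 + 2 * χ / Real.sqrt N) *
        Real.sqrt (var2 (Finset.Icc q p) (fun i => Y i τ)
          * extPot N (Finset.Icc q p) 2 (fun i => Y i τ)) :=
  stmt8_general N k hk χ T hχ1 hT X hX l hl hlk α hα Xbar Y hY q p hq hp hqp τ hτ
end
end
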